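/- arXiv:2603.28806 — 3 statements merged into one kernel-verified Lean document; each statement's English description precedes it below -/
import Mathlib

section
/- Let M > 0, α ≥ 0, and let ρ₂ be the unique zero in (0, 1) of J(r) = π/(4M) − 2·∑_{n=2}^∞ r^{n−1}/(αn + 1 − α). Define F₂ on the unit disc D by F₂(z) = (π/(4M))·z − ∑_{n=2}^∞ 2·zⁿ/(α·n² + (1 − α)·n). Then for every r with ρ₂ < r ≤ 1 there exist z₁ ≠ z₂ in D_r with F₂(z₁) = F₂(z₂); that is, F₂ is not injective on D_r for any r ∈ (ρ₂, 1]. Hence the univalence radius ρ₂ in the Landau-type theorem for W⁰_H(α) is sharp. -/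
/-!
On `[0, 1)` the extremal function is `2 φ` with `φ x = (∑ aₙ ρ₂ⁿ⁺¹) x - ∑ aₙ xⁿ⁺²/(n + 2)`,
`aₙ = 1/(α(n + 2) + 1 - α)`: the root equation `J(ρ₂) = 0` is exactly `π/(4M) = 2 ∑ aₙ ρ₂ⁿ⁺¹`.
By Bernoulli's inequality each term `ρ₂ⁿ⁺¹ x - xⁿ⁺²/(n + 2)` is maximal at `x = ρ₂` (strictly for
`n = 0`), so `φ` has a strict maximum at `ρ₂`. For `ρ₂ < b < r`, a continuous function on `[0, b]`
exceeding its endpoint values at the interior point `ρ₂` is not monotone, hence not injective.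
-/

open Set

theorem ContinuousOn.not_injOn_Icc_of_lt_of_lt {α δ : Type*} [ConditionallyCompleteLinearOrder α]
    [DenselyOrdered α] [TopologicalSpace α] [OrderTopology α] [LinearOrder δ] [TopologicalSpace δ]
    [OrderClosedTopology δ] {f : α → δ} {a b c : α} (hf : ContinuousOn f (Icc a b))
    (hac : a < c) (hcb : c < b) (hfa : f a < f c) (hfb : f b < f c) : ¬ InjOn f (Icc a b) := by
  intro hinj
  have hc : c ∈ Icc a b := ⟨hac.le, hcb.le⟩
  rcases hf.strictMonoOn_of_injOn_Icc' (hac.trans hcb).le hinj with hmono | hanti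
  · exact (hmono hc (right_mem_Icc.2 (hac.trans hcb).le) hcb).not_gt hfb
  · exact (hanti (left_mem_Icc.2 (hac.trans hcb).le) hc hac).not_gt hfa

theorem pow_succ_mul_sub_pow_div_le {ρ x : ℝ} (hρ : 0 ≤ ρ) (hx : 0 ≤ ρ + x) (n : ℕ) :
    ρ ^ (n + 1) * x - x ^ (n + 2) / (n + 2) ≤ ρ ^ (n + 1) * ρ - ρ ^ (n + 2) / (n + 2) := by
  have bernoulli : ρ ^ (n + 2) + (n + 2) * (ρ ^ (n + 1) * (x - ρ)) ≤ x ^ (n + 2) := by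
    simpa [mul_assoc] using pow_add_mul_le_add_pow hρ (b := x - ρ) (by linarith) (n + 2)
  have scaled := div_le_div_of_nonneg_right bernoulli (by positivity : (0 : ℝ) ≤ n + 2)
  rw [add_div, mul_div_cancel_left₀ _ (by positivity)] at scaled
  linarith

noncomputable def powerPrimitive (a : ℕ → ℝ) (x : ℝ) : ℝ :=
  ∑' n : ℕ, a n * x ^ (n + 2) / (n + 2)

section PowerPrimitive

variable {a : ℕ → ℝ} {C : ℝ}

theorem abs_mul_pow_div_le {x b : ℝ} {n : ℕ} (ha : |a n| ≤ C) (hx : |x| ≤ b) :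
    |a n * x ^ (n + 2) / (n + 2)| ≤ C * b ^ (n + 2) := by
  rw [abs_div, abs_mul, abs_pow, abs_of_pos (by positivity : (0 : ℝ) < n + 2)]
  calc |a n| * |x| ^ (n + 2) / (n + 2) ≤ |a n| * |x| ^ (n + 2) :=
        div_le_self (by positivity) (by linarith [n.cast_nonneg (α := ℝ)])
    _ ≤ C * b ^ (n + 2) := by gcongr; exact (abs_nonneg _).trans ha

theorem summable_mul_pow_div (ha : ∀ n, |a n| ≤ C) {x : ℝ} (hx : |x| < 1) :
    Summable fun n : ℕ => a n * x ^ (n + 2) / (n + 2) := by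
  refine .of_norm_bounded (g := fun n => C * |x| ^ 2 * |x| ^ n) ?_ fun n => ?_
  · exact (summable_geometric_of_lt_one (abs_nonneg x) hx).mul_left _
  · rw [Real.norm_eq_abs, mul_assoc, ← pow_add, add_comm 2]
    exact abs_mul_pow_div_le (ha n) le_rfl

theorem summable_mul_pow_succ (ha : ∀ n, |a n| ≤ C) {x : ℝ} (hx : |x| < 1) :
    Summable fun n : ℕ => a n * x ^ (n + 1) := by
  refine .of_norm_bounded (g := fun n => C * |x| * |x| ^ n) ?_ fun n => ?_
  · exact (summable_geometric_of_lt_one (abs_nonneg x) hx).mul_left _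
  · rw [Real.norm_eq_abs, abs_mul, abs_pow, mul_assoc, ← pow_succ']
    exact mul_le_mul_of_nonneg_right (ha n) (by positivity)

theorem continuousOn_powerPrimitive (ha : ∀ n, |a n| ≤ C) {b : ℝ} (hb0 : 0 ≤ b) (hb : b < 1) :
    ContinuousOn (powerPrimitive a) (Icc (-b) b) := by
  refine continuousOn_tsum (u := fun n => C * b ^ 2 * b ^ n) (fun n => by fun_prop)
    ((summable_geometric_of_lt_one hb0 hb).mul_left _) fun n x hx => ?_
  rw [Real.norm_eq_abs, mul_assoc, ← pow_add, add_comm 2]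
  exact abs_mul_pow_div_le (ha n) (abs_le.2 hx)

theorem mul_sub_powerPrimitive_lt (ha0 : ∀ n, 0 ≤ a n) (ha : 0 < a 0) (haC : ∀ n, a n ≤ C)
    {ρ x : ℝ} (hρ : 0 < ρ) (hρ1 : ρ < 1) (hx : 0 ≤ x) (hx1 : x < 1) (hxρ : x ≠ ρ) :
    (∑' n, a n * ρ ^ (n + 1)) * x - powerPrimitive a x
      < (∑' n, a n * ρ ^ (n + 1)) * ρ - powerPrimitive a ρ := by
  have habs : ∀ n, |a n| ≤ C := fun n => by rw [abs_of_nonneg (ha0 n)]; exact haC n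
  have hK := summable_mul_pow_succ habs (x := ρ) (by rwa [abs_of_pos hρ])
  have hexpand : ∀ y, |y| < 1 → HasSum (fun n : ℕ => a n * (ρ ^ (n + 1) * y - y ^ (n + 2) / (n + 2)))
      ((∑' n, a n * ρ ^ (n + 1)) * y - powerPrimitive a y) := fun y hy =>
    ((hK.hasSum.mul_right y).sub (summable_mul_pow_div habs hy).hasSum).congr_fun fun n => by ring
  refine hasSum_lt (i := 0) (fun n => ?_) ?_ (hexpand x (by rwa [abs_of_nonneg hx]))
    (hexpand ρ (by rwa [abs_of_pos hρ]))
  · exact mul_le_mul_of_nonneg_left (pow_succ_mul_sub_pow_div_le hρ.le (by linarith) n) (ha0 n)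
  · have hsq : 0 < (x - ρ) ^ 2 := sq_pos_of_ne_zero (sub_ne_zero.2 hxρ)
    refine mul_lt_mul_of_pos_left ?_ ha
    simp only [zero_add, pow_one, Nat.cast_zero]
    nlinarith

theorem not_injOn_mul_sub_powerPrimitive (ha0 : ∀ n, 0 ≤ a n) (ha : 0 < a 0)
    (haC : ∀ n, a n ≤ C) {ρ b : ℝ} (hρ : 0 < ρ) (hρb : ρ < b) (hb : b < 1) :
    ¬ InjOn (fun x => (∑' n, a n * ρ ^ (n + 1)) * x - powerPrimitive a x) (Icc 0 b) := by
  have hmax : ∀ x ∈ Icc 0 b, x ≠ ρ → _ := fun x hx hxρ =>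
    mul_sub_powerPrimitive_lt ha0 ha haC hρ (hρb.trans hb) hx.1 (hx.2.trans_lt hb) hxρ
  have hcont : ContinuousOn (powerPrimitive a) (Icc 0 b) :=
    (continuousOn_powerPrimitive (fun n => (abs_of_nonneg (ha0 n)).trans_le (haC n))
      (hρ.trans hρb).le hb).mono (Icc_subset_Icc (by linarith) le_rfl)
  exact ((continuousOn_const.mul continuousOn_id).sub hcont).not_injOn_Icc_of_lt_of_lt hρ hρb
    (hmax 0 (left_mem_Icc.2 (by linarith)) hρ.ne) (hmax b (right_mem_Icc.2 (by linarith)) hρb.ne')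

end PowerPrimitive

theorem extremal_ofReal (α K x : ℝ) :
    (K : ℂ) * x - ∑' n : ℕ, 2 * (x : ℂ) ^ (n + 2) / ((α : ℂ) * (n + 2) ^ 2 + (1 - (α : ℂ)) * (n + 2))
      = ((K * x - 2 * powerPrimitive (fun n => 1 / (α * (n + 2) + 1 - α)) x : ℝ) : ℂ) := by
  rw [powerPrimitive, ← tsum_mul_left]
  push_cast
  congr 1
  refine tsum_congr fun n => ?_
  rw [show (α : ℂ) * (n + 2) ^ 2 + (1 - α) * (n + 2) = (n + 2) * (α * (n + 2) + 1 - α) by ring,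
    div_mul_eq_div_div]
  ring

theorem landau_W0Ha_sharpness_general (M α : ℝ) (hα : 0 ≤ α)
    (ρ₂ : ℝ) (hρ₂ : ρ₂ ∈ Set.Ioo (0:ℝ) 1)
    (hroot : Real.pi / (4 * M)
        - 2 * ∑' n : ℕ, ρ₂ ^ (n + 1) / (α * (n + 2) + 1 - α) = 0) :
    ∀ r : ℝ, ρ₂ < r → r ≤ 1 →
      ∃ z₁ ∈ Metric.ball (0:ℂ) r, ∃ z₂ ∈ Metric.ball (0:ℂ) r, z₁ ≠ z₂ ∧
        ((Real.pi / (4 * M) : ℝ) : ℂ) * z₁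
            - ∑' n : ℕ, 2 * z₁ ^ (n + 2)
                / ((α : ℂ) * (n + 2) ^ 2 + (1 - (α : ℂ)) * (n + 2)) =
          ((Real.pi / (4 * M) : ℝ) : ℂ) * z₂
            - ∑' n : ℕ, 2 * z₂ ^ (n + 2)
                / ((α : ℂ) * (n + 2) ^ 2 + (1 - (α : ℂ)) * (n + 2)) := by
  intro r hρr hr1
  obtain ⟨hρ0, hρ1⟩ := hρ₂
  set a : ℕ → ℝ := fun n => 1 / (α * (n + 2) + 1 - α)
  have hc : ∀ n : ℕ, 1 ≤ α * (n + 2) + 1 - α := fun n => by nlinarith [n.cast_nonneg (α := ℝ)]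
  have ha0 : ∀ n, 0 ≤ a n := fun n => one_div_nonneg.2 (zero_le_one.trans (hc n))
  have ha1 : ∀ n, a n ≤ 1 := fun n => div_le_one_of_le₀ (hc n) (zero_le_one.trans (hc n))
  have hK : Real.pi / (4 * M) = 2 * ∑' n, a n * ρ₂ ^ (n + 1) := by
    simp only [a, one_div_mul_eq_div]; linarith
  obtain ⟨b, hρb, hbr⟩ := exists_between hρr
  have hφ := not_injOn_mul_sub_powerPrimitive ha0 (one_div_pos.2 (by linarith [hc 0])) ha1 hρ0 hρb
    (hbr.trans_le hr1)
  simp only [InjOn, not_forall] at hφ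
  obtain ⟨x₁, hx₁, x₂, hx₂, hφx, hne⟩ := hφ
  have hball : ∀ x ∈ Icc 0 b, (x : ℂ) ∈ Metric.ball (0 : ℂ) r := fun x hx => by
    rw [mem_ball_zero_iff, Complex.norm_real, Real.norm_of_nonneg hx.1]; linarith [hx.2]
  refine ⟨x₁, hball x₁ hx₁, x₂, hball x₂ hx₂, by exact_mod_cast hne, ?_⟩
  rw [extremal_ofReal, extremal_ofReal, hK]
  congr 1
  linear_combination 2 * hφx

/-- Sharpness of the univalence radius `ρ₂` for the class `W⁰_H(α)`: if `ρ₂`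
is the unique zero in `(0,1)` of
`J(r) = π/(4M) - 2 ∑_{n≥2} r^{n-1}/(αn + 1 - α)`, then the extremal function
`F₂(z) = (π/(4M)) z - ∑_{n≥2} 2 zⁿ/(αn² + (1-α)n)` is not injective on `D_r`
for any `r ∈ (ρ₂, 1]`. -/
theorem landau_W0Ha_sharpness (M α : ℝ) (hM : 0 < M) (hα : 0 ≤ α)
    (ρ₂ : ℝ) (hρ₂ : ρ₂ ∈ Set.Ioo (0:ℝ) 1)
    (hroot : Real.pi / (4 * M)
        - 2 * ∑' n : ℕ, ρ₂ ^ (n + 1) / (α * (n + 2) + 1 - α) = 0)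
    (huniq : ∀ r ∈ Set.Ioo (0:ℝ) 1,
      Real.pi / (4 * M)
          - 2 * ∑' n : ℕ, r ^ (n + 1) / (α * (n + 2) + 1 - α) = 0 → r = ρ₂) :
    ∀ r : ℝ, ρ₂ < r → r ≤ 1 →
      ∃ z₁ ∈ Metric.ball (0:ℂ) r, ∃ z₂ ∈ Metric.ball (0:ℂ) r, z₁ ≠ z₂ ∧
        ((Real.pi / (4 * M) : ℝ) : ℂ) * z₁
            - ∑' n : ℕ, 2 * z₁ ^ (n + 2)
                / ((α : ℂ) * (n + 2) ^ 2 + (1 - (α : ℂ)) * (n + 2)) =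
          ((Real.pi / (4 * M) : ℝ) : ℂ) * z₂
            - ∑' n : ℕ, 2 * z₂ ^ (n + 2)
                / ((α : ℂ) * (n + 2) ^ 2 + (1 - (α : ℂ)) * (n + 2)) :=
  landau_W0Ha_sharpness_general M α hα ρ₂ hρ₂ hroot
end

section
/- Let M > 0 and α ≥ 0. Let f = h + conj(g) where h and g are analytic on the unit disc D with expansions h(z) = z + ∑_{n=2}^∞ aₙzⁿ and g(z) = ∑_{n=2}^∞ bₙzⁿ, suppose |f(z)| < M for all z ∈ D, and suppose |aₙ| + |bₙ| ≤ 2/(1 + (n − 1)α) for all n ≥ 2. Then for every r ∈ (0, 1) and all points z₁, z₂ with |z₁| < r and |z₂| < r, one has |f(z₁) − f(z₂)| ≥ |z₁ − z₂| · ( π/(4M) − ∑_{n=2}^∞ 2n·r^{n−1}/(1 + (n − 1)α) ). -/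
/-!
Write `f = h + conj g`. In the series of `f z₁ - f z₂` the `n = 0` terms vanish and, as `a₁ = 1`
and `b₁ = 0`, the `n = 1` term is `z₁ - z₂`. The mean value bound
`‖z₁ⁿ - z₂ⁿ‖ ≤ n rⁿ⁻¹ ‖z₁ - z₂‖` and the coefficient bounds control the remaining terms, so
`‖f z₁ - f z₂‖ ≥ ‖z₁ - z₂‖ (1 - S)` with `S` the series of the statement.

It remains to see `π / (4M) ≤ 1`. On the circle `|z| = ρ < 1` the `e^{iθ}` Fourier coefficient of
`f` is `a₁ ρ`, because the anti-analytic part only has frequencies `-n ≤ 0`; hence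
`ρ = ‖a₁‖ ρ ≤ M`, and `ρ = π / 4` suffices.
-/

open Complex Real ComplexConjugate Metric Finset

lemma integral_exp_int_mul_I (m : ℤ) :
    ∫ θ in (0:ℝ)..2 * π, exp (m * θ * I) = if m = 0 then ((2 * π : ℝ) : ℂ) else 0 := by
  split_ifs with hm
  · simp [hm]
  · have hc : (m : ℂ) * I ≠ 0 := by simp [hm]
    simp_rw [mul_right_comm _ _ I]
    rw [integral_exp_mul_complex hc]
    have : (m : ℂ) * I * ((2 * π : ℝ) : ℂ) = m * (2 * π * I) := by push_cast; ring
    rw [this, exp_int_mul_two_pi_mul_I]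
    simp

lemma harmonic_monomial_mul_exp_eq (a b : ℂ) (r θ : ℝ) (n k : ℕ) :
    (a * circleMap 0 r θ ^ n + conj (b * circleMap 0 r θ ^ n)) * exp (-(k * θ * I)) =
      a * r ^ n * exp (((n - k : ℤ) : ℂ) * θ * I)
        + conj b * r ^ n * exp (((-(n + k) : ℤ) : ℂ) * θ * I) := by
  simp only [circleMap_zero, mul_pow, ← Complex.exp_nat_mul, map_mul, map_pow, ← exp_conj,
    conj_ofReal, conj_I, map_natCast]
  push_cast
  simp only [neg_add, sub_eq_add_neg, add_mul, neg_mul, Complex.exp_add]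
  ring_nf

lemma integral_harmonic_monomial_mul_exp (a b : ℂ) (r : ℝ) (n : ℕ) {k : ℕ} (hk : k ≠ 0) :
    ∫ θ in (0:ℝ)..2 * π,
        (a * circleMap 0 r θ ^ n + conj (b * circleMap 0 r θ ^ n)) * exp (-(k * θ * I)) =
      if n = k then a * r ^ k * (2 * π : ℝ) else 0 := by
  simp_rw [harmonic_monomial_mul_exp_eq]
  rw [intervalIntegral.integral_add (by apply Continuous.intervalIntegrable; fun_prop)
      (by apply Continuous.intervalIntegrable; fun_prop),
    intervalIntegral.integral_const_mul, intervalIntegral.integral_const_mul,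
    integral_exp_int_mul_I, integral_exp_int_mul_I, if_neg (by omega : -(n + k : ℤ) ≠ 0)]
  rcases eq_or_ne n k with rfl | hnk
  · rw [if_pos (sub_self _), if_pos rfl]
    ring
  · rw [if_neg (by omega), if_neg hnk]
    ring

lemma norm_exp_neg_natCast_mul_ofReal_mul_I (k : ℕ) (θ : ℝ) : ‖exp (-(k * θ * I))‖ = 1 := by
  simp [Complex.norm_exp]

section
variable {a b : ℕ → ℂ} {h g : ℂ → ℂ} {r : ℝ}

theorem integral_harmonic_mul_exp (hr : 0 ≤ r)
    (hh : ∀ z ∈ sphere (0:ℂ) r, HasSum (fun n => a n * z ^ n) (h z))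
    (hg : ∀ z ∈ sphere (0:ℂ) r, HasSum (fun n => b n * z ^ n) (g z))
    (hs : Summable fun n => (‖a n‖ + ‖b n‖) * r ^ n) {k : ℕ} (hk : k ≠ 0) :
    ∫ θ in (0:ℝ)..2 * π,
        (h (circleMap 0 r θ) + conj (g (circleMap 0 r θ))) * exp (-(k * θ * I)) =
      a k * r ^ k * (2 * π : ℝ) := by
  have hbound : ∀ n θ,
      ‖(a n * circleMap 0 r θ ^ n + conj (b n * circleMap 0 r θ ^ n)) * exp (-(k * θ * I))‖ ≤
        (‖a n‖ + ‖b n‖) * r ^ n := fun n θ => by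
    have hθ : ‖circleMap 0 r θ‖ = r := by simp [abs_of_nonneg hr]
    rw [norm_mul, norm_exp_neg_natCast_mul_ofReal_mul_I, mul_one]
    refine (norm_add_le _ _).trans_eq ?_
    simp only [norm_mul, norm_pow, RCLike.norm_conj, hθ]
    ring
  have hlim : ∀ θ, HasSum
      (fun n => (a n * circleMap 0 r θ ^ n + conj (b n * circleMap 0 r θ ^ n)) *
        exp (-(k * θ * I)))
      ((h (circleMap 0 r θ) + conj (g (circleMap 0 r θ))) * exp (-(k * θ * I))) := fun θ => by
    have hz := circleMap_mem_sphere 0 hr θ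
    exact ((hh _ hz).add (hasSum_conj'.mpr (hg _ hz))).mul_right _
  have hsum := intervalIntegral.hasSum_integral_of_dominated_convergence (μ := MeasureTheory.volume)
    (a := 0) (b := 2 * π) (fun n _ => (‖a n‖ + ‖b n‖) * r ^ n)
    (fun n => by apply Continuous.aestronglyMeasurable; fun_prop)
    (fun n => Filter.Eventually.of_forall fun θ _ => hbound n θ)
    (Filter.Eventually.of_forall fun _ _ => hs) intervalIntegrable_const
    (Filter.Eventually.of_forall fun θ _ => hlim θ)
  refine hsum.unique ?_
  have hkk := integral_harmonic_monomial_mul_exp (a k) (b k) r k hk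
  rw [if_pos rfl] at hkk
  rw [← hkk]
  exact hasSum_single k fun n hn => by
    rw [integral_harmonic_monomial_mul_exp _ _ _ _ hk, if_neg hn]

theorem norm_coeff_mul_pow_le_of_norm_le {M : ℝ} (hr : 0 ≤ r)
    (hh : ∀ z ∈ sphere (0:ℂ) r, HasSum (fun n => a n * z ^ n) (h z))
    (hg : ∀ z ∈ sphere (0:ℂ) r, HasSum (fun n => b n * z ^ n) (g z))
    (hs : Summable fun n => (‖a n‖ + ‖b n‖) * r ^ n)
    (hM : ∀ z ∈ sphere (0:ℂ) r, ‖h z + conj (g z)‖ ≤ M) {k : ℕ} (hk : k ≠ 0) :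
    ‖a k‖ * r ^ k ≤ M := by
  have hint := intervalIntegral.norm_integral_le_of_norm_le_const (a := 0) (b := 2 * π) (C := M)
    (f := fun θ => (h (circleMap 0 r θ) + conj (g (circleMap 0 r θ))) * exp (-(k * θ * I)))
    fun θ _ => by
      rw [norm_mul, norm_exp_neg_natCast_mul_ofReal_mul_I, mul_one]
      exact hM _ (circleMap_mem_sphere 0 hr θ)
  rw [integral_harmonic_mul_exp hr hh hg hs hk] at hint
  simp only [norm_mul, norm_pow, norm_real, Real.norm_eq_abs, abs_of_nonneg hr, sub_zero,
    abs_two, abs_of_pos pi_pos, abs_of_pos two_pi_pos] at hint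
  exact le_of_mul_le_mul_right hint two_pi_pos

theorem norm_coeff_mul_pow_le_of_forall_ball {C M ρ : ℝ}
    (hh : ∀ z ∈ ball (0:ℂ) 1, HasSum (fun n => a n * z ^ n) (h z))
    (hg : ∀ z ∈ ball (0:ℂ) 1, HasSum (fun n => b n * z ^ n) (g z))
    (hab : ∀ n, ‖a n‖ + ‖b n‖ ≤ C) (hM : ∀ z ∈ ball (0:ℂ) 1, ‖h z + conj (g z)‖ ≤ M)
    (hρ0 : 0 ≤ ρ) (hρ1 : ρ < 1) {k : ℕ} (hk : k ≠ 0) : ‖a k‖ * ρ ^ k ≤ M := by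
  have hsub : sphere (0:ℂ) ρ ⊆ ball 0 1 :=
    sphere_subset_closedBall.trans (closedBall_subset_ball hρ1)
  have hs : Summable fun n => (‖a n‖ + ‖b n‖) * ρ ^ n :=
    Summable.of_nonneg_of_le (fun n => by positivity) (fun n => by gcongr; exact hab n)
      ((summable_geometric_of_lt_one hρ0 hρ1).mul_left C)
  exact norm_coeff_mul_pow_le_of_norm_le hρ0 (fun z hz => hh z (hsub hz))
    (fun z hz => hg z (hsub hz)) hs (fun z hz => hM z (hsub hz)) hk

end

lemma norm_pow_sub_pow_le {𝕜 : Type*} [RCLike 𝕜] {z w : 𝕜} {r : ℝ} (hz : ‖z‖ ≤ r)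
    (hw : ‖w‖ ≤ r) (m : ℕ) : ‖z ^ (m + 1) - w ^ (m + 1)‖ ≤ (m + 1) * r ^ m * ‖z - w‖ := by
  refine Convex.norm_image_sub_le_of_norm_hasDerivWithin_le
    (fun x _ => (hasDerivAt_pow (m + 1) x).hasDerivWithinAt) (fun x hx => ?_)
    (convex_closedBall 0 r) (mem_closedBall_zero_iff.2 hw) (mem_closedBall_zero_iff.2 hz)
  rw [norm_mul, norm_pow, add_tsub_cancel_right, RCLike.norm_natCast, Nat.cast_succ]
  gcongr
  exact mem_closedBall_zero_iff.1 hx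

lemma norm_sub_sum_range_le_of_hasSum {E : Type*} [NormedAddCommGroup E] {u : ℕ → E} {s : E}
    (hu : HasSum u s) (k : ℕ) {c : ℕ → ℝ} {C : ℝ} (hc : HasSum c C)
    (huc : ∀ n, ‖u (n + k)‖ ≤ c n) : ‖s - ∑ i ∈ range k, u i‖ ≤ C := by
  rw [← ((hasSum_nat_add_iff' k).mpr hu).tsum_eq]
  exact tsum_of_norm_bounded hc huc

lemma hasSum_harmonic_sub {a b : ℕ → ℂ} {z w hz hw gz gw : ℂ}
    (hhz : HasSum (fun n => a n * z ^ n) hz) (hhw : HasSum (fun n => a n * w ^ n) hw)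
    (hgz : HasSum (fun n => b n * z ^ n) gz) (hgw : HasSum (fun n => b n * w ^ n) gw) :
    HasSum (fun n => a n * (z ^ n - w ^ n) + conj (b n * (z ^ n - w ^ n)))
      (hz + conj gz - (hw + conj gw)) := by
  rw [show hz + conj gz - (hw + conj gw) = hz - hw + conj (gz - gw) by rw [map_sub]; ring]
  simpa only [mul_sub] using (hhz.sub hhw).add (hasSum_conj'.mpr (hgz.sub hgw))

lemma norm_harmonic_term_sub_le (α β : ℂ) {z w : ℂ} {r : ℝ} (hz : ‖z‖ ≤ r) (hw : ‖w‖ ≤ r)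
    (m : ℕ) : ‖α * (z ^ (m + 1) - w ^ (m + 1)) + conj (β * (z ^ (m + 1) - w ^ (m + 1)))‖ ≤
      (‖α‖ + ‖β‖) * ((m + 1) * r ^ m * ‖z - w‖) := by
  refine (norm_add_le _ _).trans ?_
  rw [RCLike.norm_conj, norm_mul, norm_mul, ← add_mul]
  gcongr
  exact norm_pow_sub_pow_le hz hw m

theorem norm_harmonic_sub_sub_le {a b : ℕ → ℂ} {h g : ℂ → ℂ} {r S : ℝ} {z₁ z₂ : ℂ}
    {c : ℕ → ℝ} (hh : ∀ z ∈ ball (0:ℂ) 1, HasSum (fun n => a n * z ^ n) (h z))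
    (hg : ∀ z ∈ ball (0:ℂ) 1, HasSum (fun n => b n * z ^ n) (g z)) (hr : r < 1)
    (hz₁ : ‖z₁‖ ≤ r) (hz₂ : ‖z₂‖ ≤ r) (hc : HasSum c S)
    (habc : ∀ n : ℕ, (‖a (n + 2)‖ + ‖b (n + 2)‖) * ((n + 2) * r ^ (n + 1)) ≤ c n) :
    ‖h z₁ + conj (g z₁) - (h z₂ + conj (g z₂)) - (a 1 * (z₁ - z₂) + conj (b 1 * (z₁ - z₂)))‖ ≤
      ‖z₁ - z₂‖ * S := by
  have hmem {z : ℂ} (hz : ‖z‖ ≤ r) : z ∈ ball (0:ℂ) 1 := mem_ball_zero_iff.2 (hz.trans_lt hr)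
  have := norm_sub_sum_range_le_of_hasSum (hasSum_harmonic_sub (hh _ (hmem hz₁))
    (hh _ (hmem hz₂)) (hg _ (hmem hz₁)) (hg _ (hmem hz₂))) 2 (hc.mul_left ‖z₁ - z₂‖) fun n => ?_
  · simpa [Finset.sum_range_succ] using this
  calc _ ≤ (‖a (n + 2)‖ + ‖b (n + 2)‖) * (((n + 1 : ℕ) + 1) * r ^ (n + 1) * ‖z₁ - z₂‖) :=
        norm_harmonic_term_sub_le _ _ hz₁ hz₂ (n + 1)
    _ = (‖a (n + 2)‖ + ‖b (n + 2)‖) * ((n + 2) * r ^ (n + 1)) * ‖z₁ - z₂‖ := by push_cast; ring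
    _ ≤ ‖z₁ - z₂‖ * c n := by rw [mul_comm _ (c n)]; gcongr; exact habc n

lemma summable_distortion_series {α r : ℝ} (hα : 0 ≤ α) (hr0 : 0 ≤ r) (hr1 : r < 1) :
    Summable fun n : ℕ => 2 * ((n : ℝ) + 2) * r ^ (n + 1) / (1 + ((n : ℝ) + 1) * α) := by
  have hpoly : Summable fun n : ℕ => 2 * ((n : ℝ) + 2) * r ^ (n + 1) := by
    have hn : Summable fun n : ℕ => (n : ℝ) ^ 1 * r ^ n :=
      summable_pow_mul_geometric_of_norm_lt_one 1 (by rwa [Real.norm_of_nonneg hr0])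
    refine ((hn.mul_left (2 * r)).add
      ((summable_geometric_of_lt_one hr0 hr1).mul_left (4 * r))).congr fun n => ?_
    ring
  refine hpoly.of_nonneg_of_le (fun n => by positivity) fun n => div_le_self (by positivity) ?_
  have : 0 ≤ ((n : ℝ) + 1) * α := by positivity
  linarith

theorem landau_GkHa_lowerBound_general (M α : ℝ) (hα : 0 ≤ α)
    (h g : ℂ → ℂ) (a b : ℕ → ℂ)
    (hhsum : ∀ z ∈ Metric.ball (0:ℂ) 1, HasSum (fun n : ℕ => a n * z ^ n) (h z))
    (hgsum : ∀ z ∈ Metric.ball (0:ℂ) 1, HasSum (fun n : ℕ => b n * z ^ n) (g z))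
    (ha0 : a 0 = 0) (ha1 : a 1 = 1) (hb0 : b 0 = 0) (hb1 : b 1 = 0)
    (hcoef : ∀ n : ℕ, 2 ≤ n →
      ‖a n‖ + ‖b n‖ ≤ 2 / (1 + ((n : ℝ) - 1) * α))
    (hbound : ∀ z ∈ Metric.ball (0:ℂ) 1,
      ‖h z + starRingEnd ℂ (g z)‖ < M) :
    ∀ r ∈ Set.Ioo (0:ℝ) 1, ∀ z₁ z₂ : ℂ, ‖z₁‖ < r → ‖z₂‖ < r →
      ‖(h z₁ + starRingEnd ℂ (g z₁)) - (h z₂ + starRingEnd ℂ (g z₂))‖ ≥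
        ‖z₁ - z₂‖ *
          (Real.pi / (4 * M)
            - ∑' n : ℕ, 2 * ((n : ℝ) + 2) * r ^ (n + 1) / (1 + ((n : ℝ) + 1) * α)) := by
  intro r ⟨hr0, hr1⟩ z₁ z₂ hz₁ hz₂
  have hcoef' : ∀ n : ℕ, ‖a (n + 2)‖ + ‖b (n + 2)‖ ≤ 2 / (1 + ((n : ℝ) + 1) * α) := fun n => by
    convert hcoef (n + 2) le_add_self using 4
    push_cast; ring
  have hab : ∀ n, ‖a n‖ + ‖b n‖ ≤ 2
    | 0 => by simp [ha0, hb0]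
    | 1 => by simp [ha1, hb1]
    | n + 2 => (hcoef' n).trans (div_le_self zero_le_two (le_add_of_nonneg_right (by positivity)))
  have hπM : π / (4 * M) ≤ 1 := by
    have := norm_coeff_mul_pow_le_of_forall_ball (ρ := π / 4) hhsum hgsum hab
      (fun z hz => (hbound z hz).le) (by positivity) (by linarith [pi_lt_four]) one_ne_zero
    rw [ha1, norm_one, one_mul, pow_one] at this
    rw [div_le_one (by linarith [pi_pos])]
    linarith
  have htail := norm_harmonic_sub_sub_le hhsum hgsum hr1 hz₁.le hz₂.le
    (summable_distortion_series hα hr0.le hr1).hasSum fun n =>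
      (mul_le_mul_of_nonneg_right (hcoef' n) (by positivity)).trans_eq (by ring)
  rw [ha1, hb1, one_mul, zero_mul, map_zero, add_zero] at htail
  set D := (h z₁ + starRingEnd ℂ (g z₁)) - (h z₂ + starRingEnd ℂ (g z₂))
  set S := ∑' n : ℕ, 2 * ((n : ℝ) + 2) * r ^ (n + 1) / (1 + ((n : ℝ) + 1) * α)
  rw [ge_iff_le]
  calc ‖z₁ - z₂‖ * (π / (4 * M) - S) ≤ ‖z₁ - z₂‖ * (1 - S) := by gcongr
    _ = ‖z₁ - z₂‖ - ‖z₁ - z₂‖ * S := by ring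
    _ ≤ ‖D‖ := by linarith [norm_le_norm_add_norm_sub D (z₁ - z₂)]

/-- Distance-distortion lower bound under the sharp coefficient bounds of the
class `G_{k,H}(α,1)`: for `r ∈ (0,1)` and `|z₁|, |z₂| < r`,
`|f(z₁) - f(z₂)| ≥ |z₁ - z₂| (π/(4M) - ∑_{n≥2} 2n r^{n-1}/(1 + (n-1)α))`. -/
theorem landau_GkHa_lowerBound (M α : ℝ) (hM : 0 < M) (hα : 0 ≤ α)
    (h g : ℂ → ℂ) (a b : ℕ → ℂ)
    (hhsum : ∀ z ∈ Metric.ball (0:ℂ) 1, HasSum (fun n : ℕ => a n * z ^ n) (h z))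
    (hgsum : ∀ z ∈ Metric.ball (0:ℂ) 1, HasSum (fun n : ℕ => b n * z ^ n) (g z))
    (ha0 : a 0 = 0) (ha1 : a 1 = 1) (hb0 : b 0 = 0) (hb1 : b 1 = 0)
    (hcoef : ∀ n : ℕ, 2 ≤ n →
      ‖a n‖ + ‖b n‖ ≤ 2 / (1 + ((n : ℝ) - 1) * α))
    (hbound : ∀ z ∈ Metric.ball (0:ℂ) 1,
      ‖h z + starRingEnd ℂ (g z)‖ < M) :
    ∀ r ∈ Set.Ioo (0:ℝ) 1, ∀ z₁ z₂ : ℂ, ‖z₁‖ < r → ‖z₂‖ < r →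
      ‖(h z₁ + starRingEnd ℂ (g z₁)) - (h z₂ + starRingEnd ℂ (g z₂))‖ ≥
        ‖z₁ - z₂‖ *
          (Real.pi / (4 * M)
            - ∑' n : ℕ, 2 * ((n : ℝ) + 2) * r ^ (n + 1) / (1 + ((n : ℝ) + 1) * α)) :=
  landau_GkHa_lowerBound_general M α hα h g a b hhsum hgsum ha0 ha1 hb0 hb1 hcoef hbound
end

section
/- Let M > 0 and let f = h + conj(g), with h and g analytic on the unit disc D, be a harmonic mapping such that f(0) = 0, |f(z)| < M for all z ∈ D, and J_f(0) = |h'(0)|² − |g'(0)|² = 1. Then λ_f(0) = | |h'(0)| − |g'(0)| | ≥ π/(4M). -/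
/-!
Rotate `f = h + conj g` by a unimodular `u` chosen so that the analytic function
`φ = u h + conj u g` has `|φ'(0)| = |h'(0)| + |g'(0)| = Λ_f(0)`. Since `Re φ = Re (u f)` up to a
constant, `φ` maps the disc into the strip `|Re w| < M`, and `w ↦ tanh (π i w / (4M))` maps that
strip onto the disc; the Schwarz lemma for the composite gives `π Λ_f(0) ≤ 4M`. Finally
`λ_f(0) Λ_f(0) = J_f(0) = 1`.
-/

open Complex ComplexConjugate Metric Set

namespace Complex

lemma norm_sub_one_div_add_one_lt_one {w : ℂ} (hw : 0 < w.re) : ‖(w - 1) / (w + 1)‖ < 1 := by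
  have hsq : ‖w - 1‖ ^ 2 < ‖w + 1‖ ^ 2 := by
    simp only [Complex.sq_norm, normSq_apply, sub_re, add_re, sub_im, add_im, one_re, one_im]
    nlinarith
  have hlt : ‖w - 1‖ < ‖w + 1‖ := lt_of_pow_lt_pow_left₀ 2 (norm_nonneg _) hsq
  rwa [norm_div, div_lt_one ((norm_nonneg _).trans_lt hlt)]

lemma re_exp_pos_of_abs_im_lt {w : ℂ} (hw : |w.im| < Real.pi / 2) : 0 < (exp w).re := by
  rw [exp_re]
  exact mul_pos (Real.exp_pos _) (Real.cos_pos_of_mem_Ioo (abs_lt.1 hw))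

theorem pi_mul_norm_deriv_le_of_abs_re_lt {φ : ℂ → ℂ} {M : ℝ}
    (hφ : DifferentiableOn ℂ φ (ball 0 1)) (hφ0 : φ 0 = 0)
    (hre : ∀ z ∈ ball (0 : ℂ) 1, |(φ z).re| < M) :
    Real.pi * ‖deriv φ 0‖ ≤ 4 * M := by
  have hM : 0 < M := (abs_nonneg _).trans_lt (hre 0 (mem_ball_self one_pos))
  set r : ℝ := Real.pi / (2 * M) with hr_def
  have hr : 0 < r := by positivity
  set c : ℂ := r * I
  have hpos : ∀ z ∈ ball (0 : ℂ) 1, 0 < (exp (c * φ z)).re := fun z hz ↦ by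
    refine re_exp_pos_of_abs_im_lt ?_
    have him : (c * φ z).im = r * (φ z).re := by simp [c]
    calc |(c * φ z).im| = r * |(φ z).re| := by rw [him, abs_mul, abs_of_pos hr]
      _ < r * M := mul_lt_mul_of_pos_left (hre z hz) hr
      _ = Real.pi / 2 := by rw [hr_def]; field_simp
  have hden : ∀ z ∈ ball (0 : ℂ) 1, exp (c * φ z) + 1 ≠ 0 := fun z hz h0 ↦ by
    have := hpos z hz
    rw [eq_neg_of_add_eq_zero_left h0] at this
    norm_num at this
  set F : ℂ → ℂ := fun z ↦ (exp (c * φ z) - 1) / (exp (c * φ z) + 1)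
  have hFd : DifferentiableOn ℂ F (ball 0 1) :=
    (((hφ.const_mul c).cexp).sub_const 1).div (((hφ.const_mul c).cexp).add_const 1) hden
  have hmaps : MapsTo F (ball 0 1) (closedBall (F 0) 1) := fun z hz ↦ by
    simpa [F, hφ0] using (norm_sub_one_div_add_one_lt_one (hpos z hz)).le
  have hφ' : HasDerivAt φ (deriv φ 0) 0 :=
    (hφ.differentiableAt (isOpen_ball.mem_nhds (mem_ball_self one_pos))).hasDerivAt
  have hexp' : HasDerivAt (fun z ↦ exp (c * φ z)) (c * deriv φ 0) 0 := by
    simpa [hφ0] using (hφ'.const_mul c).cexp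
  have hF' : HasDerivAt F (c * deriv φ 0 / 2) 0 :=
    ((hexp'.sub_const 1).div (hexp'.add_const 1) (by simp [hφ0])).congr_deriv
      (by simp [hφ0]; ring)
  have hschwarz := norm_deriv_le_one_of_mapsTo_ball hFd hmaps one_pos
  rw [hF'.deriv, norm_div, norm_mul, norm_mul, norm_I, norm_real, Real.norm_of_nonneg hr.le,
    RCLike.norm_ofNat, mul_one, div_le_one two_pos] at hschwarz
  calc Real.pi * ‖deriv φ 0‖ = 2 * M * (r * ‖deriv φ 0‖) := by rw [hr_def]; field_simp
    _ ≤ 2 * M * 2 := mul_le_mul_of_nonneg_left hschwarz (by positivity)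
    _ = 4 * M := by ring

lemma exists_norm_eq_one_norm_mul_add_conj_mul (a b : ℂ) :
    ∃ u : ℂ, ‖u‖ = 1 ∧ ‖u * a + conj u * b‖ = ‖a‖ + ‖b‖ := by
  obtain ⟨α, ha⟩ : ∃ α : ℝ, a = ‖a‖ * exp (α * I) := ⟨_, (norm_mul_exp_arg_mul_I a).symm⟩
  obtain ⟨β, hb⟩ : ∃ β : ℝ, b = ‖b‖ * exp (β * I) := ⟨_, (norm_mul_exp_arg_mul_I b).symm⟩
  refine ⟨exp (↑((β - α) / 2) * I), norm_exp_ofReal_mul_I _, ?_⟩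
  have hpolar : exp (↑((β - α) / 2) * I) * a + conj (exp (↑((β - α) / 2) * I)) * b
      = ↑(‖a‖ + ‖b‖) * exp (↑((α + β) / 2) * I) := by
    conv_lhs => rw [ha, hb, ← exp_conj, map_mul, conj_ofReal, conj_I, mul_left_comm, ← exp_add,
      mul_left_comm (exp _), ← exp_add]
    push_cast
    ring_nf
  rw [hpolar, norm_mul, norm_exp_ofReal_mul_I, mul_one, norm_real,
    Real.norm_of_nonneg (by positivity)]

lemma re_mul_add_conj_mul (u v w : ℂ) : (u * v + conj u * w).re = (u * (v + conj w)).re := by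
  simp only [add_re, mul_re, conj_re, conj_im, add_im]
  ring

/-- The harmonic Schwarz lemma `Λ_f(0) ≤ 4M/π`. -/
theorem pi_mul_add_norm_deriv_le_of_norm_add_conj_lt {h g : ℂ → ℂ} {M : ℝ}
    (hh : DifferentiableOn ℂ h (ball 0 1)) (hg : DifferentiableOn ℂ g (ball 0 1))
    (hf0 : h 0 + conj (g 0) = 0) (hbound : ∀ z ∈ ball (0 : ℂ) 1, ‖h z + conj (g z)‖ < M) :
    Real.pi * (‖deriv h 0‖ + ‖deriv g 0‖) ≤ 4 * M := by
  obtain ⟨u, hu, hnorm⟩ := exists_norm_eq_one_norm_mul_add_conj_mul (deriv h 0) (deriv g 0)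
  set φ : ℂ → ℂ := fun z ↦ u * h z + conj u * g z - (u * h 0 + conj u * g 0)
  have hφ : DifferentiableOn ℂ φ (ball 0 1) := ((hh.const_mul u).add (hg.const_mul _)).sub_const _
  have hre : ∀ z ∈ ball (0 : ℂ) 1, |(φ z).re| < M := fun z hz ↦ by
    have : (φ z).re = (u * (h z + conj (g z))).re := by
      simp only [φ, sub_re, re_mul_add_conj_mul, hf0, mul_zero, zero_re, sub_zero]
    calc |(φ z).re| ≤ ‖u * (h z + conj (g z))‖ := this ▸ abs_re_le_norm _
      _ < M := by rw [norm_mul, hu, one_mul]; exact hbound z hz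
  have h0 : (0 : ℂ) ∈ ball (0 : ℂ) 1 := mem_ball_self one_pos
  have hφ' : HasDerivAt φ (u * deriv h 0 + conj u * deriv g 0) 0 :=
    ((((hh.differentiableAt (isOpen_ball.mem_nhds h0)).hasDerivAt).const_mul u).add
      (((hg.differentiableAt (isOpen_ball.mem_nhds h0)).hasDerivAt).const_mul _)).sub_const _
  simpa [φ, hφ'.deriv, hnorm] using pi_mul_norm_deriv_le_of_abs_re_lt hφ (by simp [φ]) hre

end Complex

theorem lambda_lower_bound_general (M : ℝ) (h g : ℂ → ℂ)
    (hh : DifferentiableOn ℂ h (Metric.ball 0 1))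
    (hg : DifferentiableOn ℂ g (Metric.ball 0 1))
    (hf0 : h 0 + starRingEnd ℂ (g 0) = 0)
    (hbound : ∀ z ∈ Metric.ball (0:ℂ) 1,
      ‖h z + starRingEnd ℂ (g z)‖ < M)
    (hJ : ‖deriv h 0‖ ^ 2 - ‖deriv g 0‖ ^ 2 = 1) :
    Real.pi / (4 * M) ≤ |‖deriv h 0‖ - ‖deriv g 0‖| := by
  have hΛ := pi_mul_add_norm_deriv_le_of_norm_add_conj_lt hh hg hf0 hbound
  have hM : 0 < M := (norm_nonneg _).trans_lt (hbound 0 (mem_ball_self one_pos))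
  set x := ‖deriv h 0‖
  set y := ‖deriv g 0‖
  have hJ' : (x - y) * (x + y) = 1 := by linear_combination hJ
  have hlam : 0 < x - y := by nlinarith [norm_nonneg (deriv h 0), norm_nonneg (deriv g 0)]
  rw [abs_of_pos hlam, div_le_iff₀ (by positivity)]
  calc Real.pi = (x - y) * (Real.pi * (x + y)) := by linear_combination -Real.pi * hJ'
    _ ≤ (x - y) * (4 * M) := mul_le_mul_of_nonneg_left hΛ hlam.le

/-- Consequence of the harmonic Schwarz lemma: if `f = h + conj g` is harmonic
on the unit disc with `f(0) = 0`, `|f| < M` and `J_f(0) = |h'(0)|² - |g'(0)|² = 1`,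
then `λ_f(0) = ||h'(0)| - |g'(0)|| ≥ π/(4M)`. -/
theorem lambda_lower_bound (M : ℝ) (hM : 0 < M) (h g : ℂ → ℂ)
    (hh : DifferentiableOn ℂ h (Metric.ball 0 1))
    (hg : DifferentiableOn ℂ g (Metric.ball 0 1))
    (hf0 : h 0 + starRingEnd ℂ (g 0) = 0)
    (hbound : ∀ z ∈ Metric.ball (0:ℂ) 1,
      ‖h z + starRingEnd ℂ (g z)‖ < M)
    (hJ : ‖deriv h 0‖ ^ 2 - ‖deriv g 0‖ ^ 2 = 1) :
    Real.pi / (4 * M) ≤ |‖deriv h 0‖ - ‖deriv g 0‖| :=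
  lambda_lower_bound_general M h g hh hg hf0 hbound hJ
end
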